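/- The residual variance from the CF regression relates to the OLS residual variance by σ̂_u² = σ̂_ols²(1 − t_{H₁}/n), where t_{H₁} = (β̂_ols−β̂_{2sls})^⊤[σ̂_ols²((Ŷ₁^⊤M_{Z₁}Ŷ₁)^{-1} − (Y₁^⊤M_{Z₁}Y₁)^{-1})]^{-1}(β̂_ols−β̂_{2sls}). -/

import Mathlib

open Matrix

noncomputable def proj {n : ℕ} {m : Type*} [Fintype m] [DecidableEq m]
    (A : Matrix (Fin n) m ℝ) : Matrix (Fin n) (Fin n) ℝ :=
  A * (Aᵀ * A)⁻¹ * Aᵀ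

noncomputable def annih {n : ℕ} {m : Type*} [Fintype m] [DecidableEq m]
    (A : Matrix (Fin n) m ℝ) : Matrix (Fin n) (Fin n) ℝ :=
  1 - proj A

section AuxLemmas

theorem mul_rw {a b c e : Type*} [Fintype b] [Fintype c]
    {A : Matrix a b ℝ} {B : Matrix b c ℝ} {C : Matrix a c ℝ}
    (h : A * B = C) (w : Matrix c e ℝ) : A * (B * w) = C * w := by
  rw [← Matrix.mul_assoc, h]

variable {n : ℕ} {m : Type*} [Fintype m] [DecidableEq m]

theorem proj_transpose (A : Matrix (Fin n) m ℝ) : (proj A)ᵀ = proj A := by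
  simp [proj, Matrix.transpose_mul, Matrix.transpose_nonsing_inv, Matrix.mul_assoc]

theorem annih_transpose (A : Matrix (Fin n) m ℝ) : (annih A)ᵀ = annih A := by
  simp [annih, Matrix.transpose_sub, proj_transpose]

theorem proj_apply (A : Matrix (Fin n) m ℝ) {q : Type*} (w : Matrix (Fin n) q ℝ) :
    A * ((Aᵀ * A)⁻¹ * (Aᵀ * w)) = proj A * w := by
  rw [proj, Matrix.mul_assoc, Matrix.mul_assoc]

theorem proj_mul_self (A : Matrix (Fin n) m ℝ) [Invertible (Aᵀ * A)] :
    proj A * A = A := by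
  rw [proj, Matrix.mul_assoc, Matrix.mul_assoc, Matrix.inv_mul_of_invertible,
    Matrix.mul_one]

theorem proj_idem (A : Matrix (Fin n) m ℝ) [Invertible (Aᵀ * A)] :
    proj A * proj A = proj A := by
  nth_rewrite 2 [proj]
  rw [← Matrix.mul_assoc, ← Matrix.mul_assoc, proj_mul_self]
  rfl

theorem proj_mul_annih (A : Matrix (Fin n) m ℝ) [Invertible (Aᵀ * A)] :
    proj A * annih A = 0 := by
  rw [annih, Matrix.mul_sub, Matrix.mul_one, proj_idem, sub_self]

theorem annih_idem (A : Matrix (Fin n) m ℝ) [Invertible (Aᵀ * A)] :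
    annih A * annih A = annih A := by
  simp [annih, Matrix.sub_mul, Matrix.mul_sub, proj_idem]

theorem fwl_aux {n d k p : ℕ} (Y : Matrix (Fin n) (Fin d) ℝ) (Z : Matrix (Fin n) (Fin k) ℝ)
    [Invertible (Zᵀ * Z)] [Invertible (Yᵀ * annih Z * Y)]
    [Invertible ((fromCols Y Z)ᵀ * fromCols Y Z)]
    (c : Matrix (Fin n) (Fin p) ℝ) (θ : Matrix (Fin d ⊕ Fin k) (Fin p) ℝ)
    (hθ : (fromCols Y Z)ᵀ * fromCols Y Z * θ = (fromCols Y Z)ᵀ * c) :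
    θ = fromRows ((Yᵀ * annih Z * Y)⁻¹ * (Yᵀ * (annih Z * c)))
      ((Zᵀ * Z)⁻¹ * (Zᵀ * (c - Y * ((Yᵀ * annih Z * Y)⁻¹ * (Yᵀ * (annih Z * c)))))) := by
  set β := (Yᵀ * annih Z * Y)⁻¹ * (Yᵀ * (annih Z * c)) with hβ
  set γ := (Zᵀ * Z)⁻¹ * (Zᵀ * (c - Y * β)) with hγ
  have hZγ : Z * γ = proj Z * (c - Y * β) := by
    rw [hγ, proj_apply]
  have hresid : c - (Y * β + Z * γ) = annih Z * (c - Y * β) := by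
    rw [hZγ, annih, Matrix.sub_mul, Matrix.one_mul]
    abel
  have hYr : Yᵀ * (annih Z * (c - Y * β)) = 0 := by
    have h1 : Yᵀ * (annih Z * (Y * β)) = Yᵀ * (annih Z * c) := by
      rw [hβ, ← Matrix.mul_assoc, ← Matrix.mul_assoc,
        Matrix.mul_inv_cancel_left_of_invertible]
    rw [Matrix.mul_sub, Matrix.mul_sub, h1, sub_self]
  have hZM : Zᵀ * annih Z = 0 := by
    rw [← annih_transpose, ← Matrix.transpose_mul]
    have h2 : annih Z * Z = 0 := by
      rw [annih, Matrix.sub_mul, Matrix.one_mul, proj_mul_self, sub_self]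
    rw [h2, Matrix.transpose_zero]
  have hZr : Zᵀ * (annih Z * (c - Y * β)) = 0 := by
    rw [← Matrix.mul_assoc, hZM, Matrix.zero_mul]
  have hXθ' : (fromCols Y Z)ᵀ * fromCols Y Z * fromRows β γ
      = (fromCols Y Z)ᵀ * c := by
    have h1 : fromCols Y Z * fromRows β γ = Y * β + Z * γ :=
      Matrix.fromCols_mul_fromRows _ _ _ _
    have h2 : (fromCols Y Z)ᵀ * (c - (Y * β + Z * γ)) = 0 := by
      rw [hresid, Matrix.transpose_fromCols, Matrix.fromRows_mul, hYr, hZr,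
        Matrix.fromRows_zero]
    rw [Matrix.mul_sub] at h2
    rw [Matrix.mul_assoc, h1]
    exact (sub_eq_zero.mp h2).symm
  calc θ = ((fromCols Y Z)ᵀ * fromCols Y Z)⁻¹
        * ((fromCols Y Z)ᵀ * fromCols Y Z * θ) :=
      (Matrix.inv_mul_cancel_left_of_invertible _ _).symm
    _ = ((fromCols Y Z)ᵀ * fromCols Y Z)⁻¹
        * ((fromCols Y Z)ᵀ * fromCols Y Z * fromRows β γ) := by rw [hθ, hXθ']
    _ = fromRows β γ := Matrix.inv_mul_cancel_left_of_invertible _ _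

end AuxLemmas

theorem stmt_16 {n d k₁ k₂ : ℕ} (hn : 0 < n)
    (Y₁ : Matrix (Fin n) (Fin d) ℝ) (Y₂ : Matrix (Fin n) (Fin 1) ℝ)
    (Z₁ : Matrix (Fin n) (Fin k₁) ℝ) (Z₂ : Matrix (Fin n) (Fin k₂) ℝ)
    (Z : Matrix (Fin n) (Fin k₁ ⊕ Fin k₂) ℝ) (hZ : Z = fromCols Z₁ Z₂)
    (X : Matrix (Fin n) (Fin d ⊕ Fin k₁) ℝ) (hX : X = fromCols Y₁ Z₁)
    (Vhat : Matrix (Fin n) (Fin d) ℝ) (hV : Vhat = annih Z * Y₁)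
    (Yhat : Matrix (Fin n) (Fin d) ℝ) (hYhat : Yhat = proj Z * Y₁)
    (hZZ : Invertible (Zᵀ * Z)) (hZ₁Z₁ : Invertible (Z₁ᵀ * Z₁))
    (hXX : Invertible (Xᵀ * X)) (hXPX : Invertible (Xᵀ * proj Z * X))
    (hYMZY : Invertible (Y₁ᵀ * annih Z * Y₁))
    (hYMY : Invertible (Y₁ᵀ * annih Z₁ * Y₁))
    (hYPY : Invertible (Y₁ᵀ * (proj Z - proj Z₁) * Y₁))
    (hVMV : Invertible (Vhatᵀ * annih X * Vhat))
    (hYhMYh : Invertible (Yhatᵀ * annih Z₁ * Yhat))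
    (hdiff : ((Yhatᵀ * annih Z₁ * Yhat)⁻¹ - (Y₁ᵀ * annih Z₁ * Y₁)⁻¹).PosDef)
    (θols θcf : Matrix (Fin d ⊕ Fin k₁) (Fin 1) ℝ)
    (hθols : θols = (Xᵀ * X)⁻¹ * (Xᵀ * Y₂))
    (hθcf : θcf = (Xᵀ * proj Z * X)⁻¹ * (Xᵀ * proj Z * Y₂))
    (βols β2sls ρcf : Matrix (Fin d) (Fin 1) ℝ)
    (hβols : βols = (Y₁ᵀ * annih Z₁ * Y₁)⁻¹ * (Y₁ᵀ * annih Z₁ * Y₂))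
    (hβ2sls : β2sls = (Y₁ᵀ * (proj Z - proj Z₁) * Y₁)⁻¹ *
      (Y₁ᵀ * (proj Z - proj Z₁) * Y₂))
    (hρ : ρcf = (Vhatᵀ * annih X * Vhat)⁻¹ * (Vhatᵀ * annih X * Y₂))
    (uhat : Matrix (Fin n) (Fin 1) ℝ)
    (huhat : uhat = Y₂ - X * θcf - Vhat * ρcf)
    (σu2 σols2 : ℝ)
    (hσu2 : σu2 = (uhatᵀ * uhat) 0 0 / n)
    (hσols2 : σols2 = ((Y₂ - X * θols)ᵀ * (Y₂ - X * θols)) 0 0 / n)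
    (hσolspos : 0 < σols2)
    (tH1 : ℝ)
    (htH1 : tH1 = ((βols - β2sls)ᵀ *
      (σols2 • ((Yhatᵀ * annih Z₁ * Yhat)⁻¹ - (Y₁ᵀ * annih Z₁ * Y₁)⁻¹))⁻¹ *
      (βols - β2sls)) 0 0) :
    σu2 = σols2 * (1 - tH1 / n) := by
  -- ## basic projection facts
  have hPt : (proj Z)ᵀ = proj Z := proj_transpose Z
  have hQt : (proj Z₁)ᵀ = proj Z₁ := proj_transpose Z₁
  have hMt : (annih Z)ᵀ = annih Z := annih_transpose Z
  have hNt : (annih Z₁)ᵀ = annih Z₁ := annih_transpose Z₁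
  have hPP : proj Z * proj Z = proj Z := proj_idem Z
  have hQQ : proj Z₁ * proj Z₁ = proj Z₁ := proj_idem Z₁
  have hMM : annih Z * annih Z = annih Z := annih_idem Z
  have hNN : annih Z₁ * annih Z₁ = annih Z₁ := annih_idem Z₁
  have hPM : proj Z * annih Z = 0 := proj_mul_annih Z
  have hPZ1 : proj Z * Z₁ = Z₁ := by
    have h := proj_mul_self Z
    rw [hZ, Matrix.mul_fromCols] at h
    have h2 := congrArg Matrix.toCols₁ h
    simp only [Matrix.toCols₁_fromCols] at h2
    rw [hZ]; exact h2
  have hMZ1 : annih Z * Z₁ = 0 := by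
    rw [annih, Matrix.sub_mul, Matrix.one_mul, hPZ1, sub_self]
  have hPQ : proj Z * proj Z₁ = proj Z₁ := by
    rw [show proj Z₁ = Z₁ * ((Z₁ᵀ * Z₁)⁻¹ * Z₁ᵀ) from by rw [proj, Matrix.mul_assoc]]
    rw [← Matrix.mul_assoc, hPZ1]
  have hQP : proj Z₁ * proj Z = proj Z₁ := by
    have h := congrArg Matrix.transpose hPQ
    rwa [Matrix.transpose_mul, hQt, hPt] at h
  have hQM : proj Z₁ * annih Z = 0 := by
    rw [annih, Matrix.mul_sub, Matrix.mul_one, hQP, sub_self]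
  have hNM : annih Z₁ * annih Z = annih Z := by
    rw [annih, Matrix.sub_mul, Matrix.one_mul, hQM, sub_zero]
  have hPN : proj Z * annih Z₁ = proj Z - proj Z₁ := by
    rw [annih, Matrix.mul_sub, Matrix.mul_one, hPQ]
  -- ## Vhat facts
  have hNV : annih Z₁ * Vhat = Vhat := by
    rw [hV, ← Matrix.mul_assoc, hNM]
  have hQV : proj Z₁ * Vhat = 0 := by
    rw [hV, ← Matrix.mul_assoc, hQM, Matrix.zero_mul]
  have hVtN : Vhatᵀ * annih Z₁ = Vhatᵀ := by
    have h := congrArg Matrix.transpose hNV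
    rwa [Matrix.transpose_mul, hNt] at h
  have hVtQ : Vhatᵀ * proj Z₁ = 0 := by
    have h := congrArg Matrix.transpose hQV
    rwa [Matrix.transpose_mul, hQt, Matrix.transpose_zero] at h
  have hY1tV : Y₁ᵀ * Vhat = Y₁ᵀ * annih Z * Y₁ := by
    rw [hV, ← Matrix.mul_assoc]
  have hVtY1 : Vhatᵀ * Y₁ = Y₁ᵀ * annih Z * Y₁ := by
    rw [hV, Matrix.transpose_mul, hMt]
  have hVtV : Vhatᵀ * Vhat = Y₁ᵀ * annih Z * Y₁ := by
    rw [hV, Matrix.transpose_mul, hMt, ← Matrix.mul_assoc, Matrix.mul_assoc Y₁ᵀ, hMM]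
  have hVtY2 : Vhatᵀ * Y₂ = Y₁ᵀ * annih Z * Y₂ := by
    rw [hV, Matrix.transpose_mul, hMt]
  -- ## Yhat facts
  have hY1dec : Y₁ = Yhat + Vhat := by
    rw [hYhat, hV, annih, Matrix.sub_mul, Matrix.one_mul]
    abel
  have hA0 : Yhatᵀ * annih Z₁ * Yhat = Y₁ᵀ * (proj Z - proj Z₁) * Y₁ := by
    rw [hYhat, Matrix.transpose_mul, hPt, Matrix.mul_assoc Y₁ᵀ, hPN,
      ← Matrix.mul_assoc, Matrix.mul_assoc Y₁ᵀ, Matrix.sub_mul, hPP, hQP]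
  have hA0c : Yhatᵀ * annih Z₁ * Y₂ = Y₁ᵀ * (proj Z - proj Z₁) * Y₂ := by
    rw [hYhat, Matrix.transpose_mul, hPt, Matrix.mul_assoc Y₁ᵀ, hPN]
  -- ## split of annih Z
  have hMsplit : annih Z = annih Z₁ - (proj Z - proj Z₁) := by
    rw [annih, annih]; abel
  -- ## normal equations
  have hNols : Xᵀ * X * θols = Xᵀ * Y₂ := by
    rw [hθols, Matrix.mul_inv_cancel_left_of_invertible]
  have hNcf0 : Xᵀ * proj Z * X * θcf = Xᵀ * proj Z * Y₂ := by
    rw [hθcf, Matrix.mul_inv_cancel_left_of_invertible]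
  have hNβols : Y₁ᵀ * annih Z₁ * Y₁ * βols = Y₁ᵀ * annih Z₁ * Y₂ := by
    rw [hβols, Matrix.mul_inv_cancel_left_of_invertible]
  have hNβ2 : Y₁ᵀ * (proj Z - proj Z₁) * Y₁ * β2sls = Y₁ᵀ * (proj Z - proj Z₁) * Y₂ := by
    rw [hβ2sls, Matrix.mul_inv_cancel_left_of_invertible]
  have hNρ : Vhatᵀ * annih X * Vhat * ρcf = Vhatᵀ * annih X * Y₂ := by
    rw [hρ, Matrix.mul_inv_cancel_left_of_invertible]
  have hY1MY2 : Y₁ᵀ * annih Z * Y₂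
      = Y₁ᵀ * annih Z₁ * Y₁ * βols - Y₁ᵀ * (proj Z - proj Z₁) * Y₁ * β2sls := by
    rw [hMsplit, Matrix.mul_sub, Matrix.sub_mul, ← hNβols, ← hNβ2]
  have hBFA : Y₁ᵀ * annih Z * Y₁
      = Y₁ᵀ * annih Z₁ * Y₁ - Y₁ᵀ * (proj Z - proj Z₁) * Y₁ := by
    rw [hMsplit, Matrix.mul_sub, Matrix.sub_mul]
  have hBFA2 : Y₁ᵀ * (proj Z - proj Z₁) * Y₁
      = Y₁ᵀ * annih Z₁ * Y₁ - Y₁ᵀ * annih Z * Y₁ := by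
    rw [hBFA]; abel
  -- ## FWL for OLS
  haveI hXXf : Invertible ((fromCols Y₁ Z₁)ᵀ * fromCols Y₁ Z₁) := by
    rw [← hX]; exact hXX
  have hfw1 := fwl_aux Y₁ Z₁ Y₂ θols (by rw [← hX]; exact hNols)
  rw [← Matrix.mul_assoc Y₁ᵀ (annih Z₁) Y₂, ← hβols] at hfw1
  have hXθols : X * θols = proj Z₁ * Y₂ + annih Z₁ * (Y₁ * βols) := by
    rw [hfw1, hX, Matrix.fromCols_mul_fromRows, proj_apply]
    simp only [annih, Matrix.mul_sub, Matrix.sub_mul, Matrix.one_mul]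
    abel
  -- ## FWL for 2SLS / CF
  have hPX : proj Z * X = fromCols Yhat Z₁ := by
    rw [hX, Matrix.mul_fromCols, hPZ1, ← hYhat]
  have hWW : (fromCols Yhat Z₁)ᵀ * fromCols Yhat Z₁ = Xᵀ * proj Z * X := by
    rw [← hPX, Matrix.transpose_mul, hPt, Matrix.mul_assoc Xᵀ, mul_rw hPP,
      ← Matrix.mul_assoc]
  haveI hWWi : Invertible ((fromCols Yhat Z₁)ᵀ * fromCols Yhat Z₁) := by
    rw [hWW]; exact hXPX
  have hNcfW : (fromCols Yhat Z₁)ᵀ * fromCols Yhat Z₁ * θcf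
      = (fromCols Yhat Z₁)ᵀ * Y₂ := by
    rw [hWW, ← hPX, Matrix.transpose_mul, hPt]
    exact hNcf0
  have hfw2 := fwl_aux Yhat Z₁ Y₂ θcf hNcfW
  have hβ2eq : β2sls = (Yhatᵀ * annih Z₁ * Yhat)⁻¹ * (Yhatᵀ * annih Z₁ * Y₂) := by
    rw [hβ2sls, ← hA0, ← hA0c]
  rw [← Matrix.mul_assoc Yhatᵀ (annih Z₁) Y₂, ← hβ2eq] at hfw2
  have hMX : annih Z * X = fromCols Vhat 0 := by
    rw [hX, Matrix.mul_fromCols, hMZ1, ← hV]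
  have hPMsum : proj Z + annih Z = 1 := by
    rw [annih]; abel
  have hXθcf : X * θcf = (proj Z₁ * Y₂ + annih Z₁ * (Yhat * β2sls)) + Vhat * β2sls := by
    have h1 : proj Z * (X * θcf) = proj Z₁ * Y₂ + annih Z₁ * (Yhat * β2sls) := by
      rw [← Matrix.mul_assoc, hPX, hfw2, Matrix.fromCols_mul_fromRows, proj_apply]
      simp only [annih, Matrix.mul_sub, Matrix.sub_mul, Matrix.one_mul]
      abel
    have h2 : annih Z * (X * θcf) = Vhat * β2sls := by
      rw [← Matrix.mul_assoc, hMX, hfw2, Matrix.fromCols_mul_fromRows,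
        Matrix.zero_mul, add_zero]
    calc X * θcf = (proj Z + annih Z) * (X * θcf) := by rw [hPMsum, Matrix.one_mul]
      _ = proj Z * (X * θcf) + annih Z * (X * θcf) := Matrix.add_mul _ _ _
      _ = _ := by rw [h1, h2]
  -- ## projection of Vhat on X
  have hfw3 := fwl_aux Y₁ Z₁ Vhat ((Xᵀ * X)⁻¹ * (Xᵀ * Vhat))
    (by rw [← hX]; exact Matrix.mul_inv_cancel_left_of_invertible _ _)
  rw [hNV, hY1tV] at hfw3
  have hPXV : X * ((Xᵀ * X)⁻¹ * (Xᵀ * Vhat))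
      = annih Z₁ * (Y₁ * ((Y₁ᵀ * annih Z₁ * Y₁)⁻¹ * (Y₁ᵀ * annih Z * Y₁))) := by
    rw [hfw3, hX, Matrix.fromCols_mul_fromRows, proj_apply, Matrix.mul_sub, hQV]
    simp only [annih, Matrix.sub_mul, Matrix.one_mul]
    abel
  have hKmat : Vhatᵀ * annih X * Vhat
      = Y₁ᵀ * annih Z * Y₁
        - Y₁ᵀ * annih Z * Y₁ * ((Y₁ᵀ * annih Z₁ * Y₁)⁻¹ * (Y₁ᵀ * annih Z * Y₁)) := by
    rw [Matrix.mul_assoc, annih, Matrix.sub_mul, Matrix.one_mul,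
      show proj X * Vhat = X * ((Xᵀ * X)⁻¹ * (Xᵀ * Vhat)) from (proj_apply X Vhat).symm,
      hPXV, Matrix.mul_sub, hVtV, ← Matrix.mul_assoc Vhatᵀ (annih Z₁), hVtN,
      ← Matrix.mul_assoc, hVtY1]
  have hwvec : Vhatᵀ * annih X * Y₂
      = Y₁ᵀ * (proj Z - proj Z₁) * Y₁ * (βols - β2sls) := by
    rw [Matrix.mul_assoc, annih, Matrix.sub_mul, Matrix.one_mul,
      show proj X * Y₂ = X * ((Xᵀ * X)⁻¹ * (Xᵀ * Y₂)) from (proj_apply X Y₂).symm,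
      ← hθols, hXθols, Matrix.mul_sub, Matrix.mul_add,
      ← Matrix.mul_assoc Vhatᵀ (proj Z₁) Y₂, hVtQ, Matrix.zero_mul,
      ← Matrix.mul_assoc Vhatᵀ (annih Z₁), hVtN, ← Matrix.mul_assoc, hVtY1,
      hVtY2, hY1MY2, hBFA]
    simp only [Matrix.mul_sub, Matrix.sub_mul, zero_add]
    abel
  -- ## closed form of ρcf
  have hcand : Vhatᵀ * annih X * Vhat
      * ((Y₁ᵀ * annih Z * Y₁)⁻¹ * (Y₁ᵀ * annih Z₁ * Y₁ * (βols - β2sls)))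
      = Y₁ᵀ * (proj Z - proj Z₁) * Y₁ * (βols - β2sls) := by
    rw [hKmat, Matrix.sub_mul, Matrix.mul_inv_cancel_left_of_invertible,
      Matrix.mul_assoc (Y₁ᵀ * annih Z * Y₁) _ _,
      Matrix.mul_assoc (Y₁ᵀ * annih Z₁ * Y₁)⁻¹ _ _,
      Matrix.mul_inv_cancel_left_of_invertible,
      Matrix.inv_mul_cancel_left_of_invertible, hBFA2, Matrix.sub_mul]
  have hρval : ρcf = (Y₁ᵀ * annih Z * Y₁)⁻¹ * (Y₁ᵀ * annih Z₁ * Y₁ * (βols - β2sls)) := by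
    have h1 : Vhatᵀ * annih X * Vhat * ρcf = Vhatᵀ * annih X * Vhat
        * ((Y₁ᵀ * annih Z * Y₁)⁻¹ * (Y₁ᵀ * annih Z₁ * Y₁ * (βols - β2sls))) := by
      rw [hNρ, hwvec, hcand]
    calc ρcf = (Vhatᵀ * annih X * Vhat)⁻¹ * (Vhatᵀ * annih X * Vhat * ρcf) :=
        (Matrix.inv_mul_cancel_left_of_invertible _ _).symm
      _ = (Vhatᵀ * annih X * Vhat)⁻¹ * (Vhatᵀ * annih X * Vhat
          * ((Y₁ᵀ * annih Z * Y₁)⁻¹ * (Y₁ᵀ * annih Z₁ * Y₁ * (βols - β2sls)))) := by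
        rw [h1]
      _ = _ := Matrix.inv_mul_cancel_left_of_invertible _ _
  -- ## transpose facts
  have hBt : (Y₁ᵀ * annih Z₁ * Y₁)ᵀ = Y₁ᵀ * annih Z₁ * Y₁ := by
    rw [Matrix.transpose_mul, Matrix.transpose_mul, Matrix.transpose_transpose, hNt,
      ← Matrix.mul_assoc]
  have hFt : (Y₁ᵀ * annih Z * Y₁)ᵀ = Y₁ᵀ * annih Z * Y₁ := by
    rw [Matrix.transpose_mul, Matrix.transpose_mul, Matrix.transpose_transpose, hMt,
      ← Matrix.mul_assoc]
  have hA0t : (Y₁ᵀ * (proj Z - proj Z₁) * Y₁)ᵀ = Y₁ᵀ * (proj Z - proj Z₁) * Y₁ := by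
    rw [Matrix.transpose_mul, Matrix.transpose_mul, Matrix.transpose_transpose,
      Matrix.transpose_sub, hPt, hQt, ← Matrix.mul_assoc]
  have hFinvT : ((Y₁ᵀ * annih Z * Y₁)⁻¹)ᵀ = (Y₁ᵀ * annih Z * Y₁)⁻¹ := by
    rw [Matrix.transpose_nonsing_inv, hFt]
  have hρT : ρcfᵀ = (βols - β2sls)ᵀ * (Y₁ᵀ * annih Z₁ * Y₁)
      * (Y₁ᵀ * annih Z * Y₁)⁻¹ := by
    rw [hρval, Matrix.transpose_mul, Matrix.transpose_mul, hFinvT, hBt,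
      ← Matrix.mul_assoc]
  -- ## residual identities
  have he : Y₂ - X * θols = annih Z₁ * (Y₂ - Y₁ * βols) := by
    rw [hXθols]
    simp only [annih, Matrix.sub_mul, Matrix.mul_sub, Matrix.one_mul]
    abel
  have hsplit : uhat
      = annih Z₁ * ((Y₂ - Y₁ * βols) + (Y₁ * (βols - β2sls) - Vhat * ρcf)) := by
    have hstep : (Y₂ - Y₁ * βols) + (Y₁ * (βols - β2sls) - Vhat * ρcf)
        = Y₂ - (Yhat + Vhat) * β2sls - Vhat * ρcf := by
      rw [Matrix.mul_sub, ← hY1dec]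
      abel
    rw [hstep, huhat, hXθcf, Matrix.mul_sub, Matrix.mul_sub, Matrix.add_mul,
      Matrix.mul_add, mul_rw hNV, mul_rw hNV, annih]
    simp only [Matrix.sub_mul, Matrix.one_mul]
    abel
  -- ## scalar building blocks
  have c1 : Y₁ᵀ * (annih Z₁ * (Y₂ - Y₁ * βols)) = 0 := by
    rw [Matrix.mul_sub, Matrix.mul_sub, ← Matrix.mul_assoc, ← Matrix.mul_assoc,
      ← Matrix.mul_assoc, hNβols, sub_self]
  have c2 : Vhatᵀ * (annih Z₁ * (Y₂ - Y₁ * βols))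
      = Y₁ᵀ * (proj Z - proj Z₁) * Y₁ * (βols - β2sls) := by
    rw [Matrix.mul_sub, Matrix.mul_sub, ← Matrix.mul_assoc, hVtN, ← Matrix.mul_assoc,
      hVtN, ← Matrix.mul_assoc, hVtY1, hVtY2, hY1MY2, hBFA]
    simp only [Matrix.mul_sub, Matrix.sub_mul]
    abel
  have r1 : (Y₂ - Y₁ * βols)ᵀ * annih Z₁ * Y₁ = 0 := by
    have h := congrArg Matrix.transpose c1
    rwa [Matrix.transpose_mul, Matrix.transpose_mul, Matrix.transpose_transpose, hNt,
      Matrix.transpose_zero] at h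
  have c2' : Vhatᵀ * (Y₂ - Y₁ * βols)
      = Y₁ᵀ * (proj Z - proj Z₁) * Y₁ * (βols - β2sls) := by
    rw [← hVtN, Matrix.mul_assoc]
    exact c2
  have r2 : (Y₂ - Y₁ * βols)ᵀ * Vhat
      = (βols - β2sls)ᵀ * (Y₁ᵀ * (proj Z - proj Z₁) * Y₁) := by
    have h := congrArg Matrix.transpose c2'
    rwa [Matrix.transpose_mul, Matrix.transpose_mul, Matrix.transpose_transpose,
      hA0t] at h
  have c3 : Y₁ᵀ * (annih Z₁ * (Y₁ * (βols - β2sls)))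
      = Y₁ᵀ * annih Z₁ * Y₁ * (βols - β2sls) := by
    rw [← Matrix.mul_assoc, ← Matrix.mul_assoc]
  have c4 : Y₁ᵀ * (annih Z₁ * (Vhat * ρcf))
      = Y₁ᵀ * annih Z₁ * Y₁ * (βols - β2sls) := by
    rw [mul_rw hNV, ← Matrix.mul_assoc, hY1tV, hρval,
      Matrix.mul_inv_cancel_left_of_invertible]
  have c5 : Vhatᵀ * (annih Z₁ * (Y₁ * (βols - β2sls)))
      = Y₁ᵀ * annih Z * Y₁ * (βols - β2sls) := by
    rw [← Matrix.mul_assoc, hVtN, ← Matrix.mul_assoc, hVtY1]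
  have c6 : Vhatᵀ * (annih Z₁ * (Vhat * ρcf))
      = Y₁ᵀ * annih Z₁ * Y₁ * (βols - β2sls) := by
    rw [mul_rw hNV, ← Matrix.mul_assoc, hVtV, hρval,
      Matrix.mul_inv_cancel_left_of_invertible]
  have hkey : Y₁ᵀ * (proj Z - proj Z₁) * Y₁
      * ((Y₁ᵀ * annih Z * Y₁)⁻¹ * (Y₁ᵀ * annih Z₁ * Y₁ * (βols - β2sls)))
      = Y₁ᵀ * annih Z₁ * Y₁
        * ((Y₁ᵀ * annih Z * Y₁)⁻¹ * (Y₁ᵀ * annih Z₁ * Y₁ * (βols - β2sls)))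
      - Y₁ᵀ * annih Z₁ * Y₁ * (βols - β2sls) := by
    rw [hBFA2, Matrix.sub_mul, Matrix.mul_inv_cancel_left_of_invertible]
  -- ## the four pieces
  have hT2 : (Y₂ - Y₁ * βols)ᵀ
      * (annih Z₁ * (Y₁ * (βols - β2sls) - Vhat * ρcf))
      = (βols - β2sls)ᵀ * (Y₁ᵀ * annih Z₁ * Y₁ * (βols - β2sls))
        - (βols - β2sls)ᵀ * (Y₁ᵀ * annih Z₁ * Y₁
          * ((Y₁ᵀ * annih Z * Y₁)⁻¹ * (Y₁ᵀ * annih Z₁ * Y₁ * (βols - β2sls)))) := by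
    have e1 : (Y₂ - Y₁ * βols)ᵀ * (annih Z₁ * (Y₁ * (βols - β2sls))) = 0 := by
      rw [← Matrix.mul_assoc, ← Matrix.mul_assoc, r1, Matrix.zero_mul]
    have e2 : (Y₂ - Y₁ * βols)ᵀ * (annih Z₁ * (Vhat * ρcf))
        = (βols - β2sls)ᵀ * (Y₁ᵀ * (proj Z - proj Z₁) * Y₁
          * ((Y₁ᵀ * annih Z * Y₁)⁻¹ * (Y₁ᵀ * annih Z₁ * Y₁ * (βols - β2sls)))) := by
      rw [mul_rw hNV, ← Matrix.mul_assoc, r2, hρval, Matrix.mul_assoc]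
    rw [Matrix.mul_sub (annih Z₁) (Y₁ * (βols - β2sls)) (Vhat * ρcf),
      Matrix.mul_sub ((Y₂ - Y₁ * βols)ᵀ), e1, e2, hkey,
      Matrix.mul_sub ((βols - β2sls)ᵀ)]
    abel
  have hT3 : (Y₁ * (βols - β2sls) - Vhat * ρcf)ᵀ
      * (annih Z₁ * (Y₂ - Y₁ * βols))
      = 0 - (βols - β2sls)ᵀ * (Y₁ᵀ * annih Z₁ * Y₁
          * ((Y₁ᵀ * annih Z * Y₁)⁻¹ * (Y₁ᵀ * (proj Z - proj Z₁) * Y₁ * (βols - β2sls)))) := by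
    rw [Matrix.transpose_sub, Matrix.transpose_mul, Matrix.transpose_mul,
      Matrix.sub_mul, Matrix.mul_assoc ((βols - β2sls)ᵀ), c1, Matrix.mul_zero,
      Matrix.mul_assoc ρcfᵀ, c2, hρT, Matrix.mul_assoc _ ((Y₁ᵀ * annih Z * Y₁)⁻¹),
      Matrix.mul_assoc ((βols - β2sls)ᵀ)]
  have hT4 : (Y₁ * (βols - β2sls) - Vhat * ρcf)ᵀ
      * (annih Z₁ * (Y₁ * (βols - β2sls) - Vhat * ρcf))
      = (βols - β2sls)ᵀ * (Y₁ᵀ * annih Z₁ * Y₁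
          * ((Y₁ᵀ * annih Z * Y₁)⁻¹ * (Y₁ᵀ * annih Z₁ * Y₁ * (βols - β2sls))))
        - (βols - β2sls)ᵀ * (Y₁ᵀ * annih Z₁ * Y₁ * (βols - β2sls)) := by
    have g3 : (βols - β2sls)ᵀ * Y₁ᵀ * (annih Z₁ * (Y₁ * (βols - β2sls)))
        = (βols - β2sls)ᵀ * (Y₁ᵀ * annih Z₁ * Y₁ * (βols - β2sls)) := by
      rw [Matrix.mul_assoc, c3]
    have g4 : (βols - β2sls)ᵀ * Y₁ᵀ * (annih Z₁ * (Vhat * ρcf))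
        = (βols - β2sls)ᵀ * (Y₁ᵀ * annih Z₁ * Y₁ * (βols - β2sls)) := by
      rw [Matrix.mul_assoc, c4]
    have g5 : ρcfᵀ * Vhatᵀ * (annih Z₁ * (Y₁ * (βols - β2sls)))
        = (βols - β2sls)ᵀ * (Y₁ᵀ * annih Z₁ * Y₁ * (βols - β2sls)) := by
      rw [Matrix.mul_assoc, c5, hρT, Matrix.mul_assoc _ ((Y₁ᵀ * annih Z * Y₁)⁻¹),
        Matrix.inv_mul_cancel_left_of_invertible, Matrix.mul_assoc]
    have g6 : ρcfᵀ * Vhatᵀ * (annih Z₁ * (Vhat * ρcf))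
        = (βols - β2sls)ᵀ * (Y₁ᵀ * annih Z₁ * Y₁
          * ((Y₁ᵀ * annih Z * Y₁)⁻¹ * (Y₁ᵀ * annih Z₁ * Y₁ * (βols - β2sls)))) := by
      rw [Matrix.mul_assoc, c6, hρT, Matrix.mul_assoc _ ((Y₁ᵀ * annih Z * Y₁)⁻¹),
        Matrix.mul_assoc ((βols - β2sls)ᵀ)]
    rw [Matrix.transpose_sub, Matrix.transpose_mul, Matrix.transpose_mul,
      Matrix.mul_sub (annih Z₁) (Y₁ * (βols - β2sls)) (Vhat * ρcf),
      Matrix.sub_mul,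
      Matrix.mul_sub ((βols - β2sls)ᵀ * Y₁ᵀ),
      Matrix.mul_sub (ρcfᵀ * Vhatᵀ), g3, g4, g5, g6]
    abel
  -- ## assemble the quadratic form identity
  have huu : uhatᵀ * uhat
      = ((Y₂ - Y₁ * βols) + (Y₁ * (βols - β2sls) - Vhat * ρcf))ᵀ
        * (annih Z₁ * ((Y₂ - Y₁ * βols) + (Y₁ * (βols - β2sls) - Vhat * ρcf))) := by
    rw [hsplit, Matrix.transpose_mul, hNt, Matrix.mul_assoc, mul_rw hNN]
  have hee : (Y₂ - X * θols)ᵀ * (Y₂ - X * θols)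
      = (Y₂ - Y₁ * βols)ᵀ * (annih Z₁ * (Y₂ - Y₁ * βols)) := by
    rw [he, Matrix.transpose_mul, hNt, Matrix.mul_assoc, mul_rw hNN]
  have hexp : ((Y₂ - Y₁ * βols) + (Y₁ * (βols - β2sls) - Vhat * ρcf))ᵀ
        * (annih Z₁ * ((Y₂ - Y₁ * βols) + (Y₁ * (βols - β2sls) - Vhat * ρcf)))
      = (Y₂ - Y₁ * βols)ᵀ * (annih Z₁ * (Y₂ - Y₁ * βols))
        + (Y₂ - Y₁ * βols)ᵀ * (annih Z₁ * (Y₁ * (βols - β2sls) - Vhat * ρcf))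
        + ((Y₁ * (βols - β2sls) - Vhat * ρcf)ᵀ * (annih Z₁ * (Y₂ - Y₁ * βols))
          + (Y₁ * (βols - β2sls) - Vhat * ρcf)ᵀ
            * (annih Z₁ * (Y₁ * (βols - β2sls) - Vhat * ρcf))) := by
    simp only [Matrix.transpose_add, Matrix.mul_add, Matrix.add_mul]
    abel
  have hBig : uhatᵀ * uhat
      = (Y₂ - X * θols)ᵀ * (Y₂ - X * θols)
        - (βols - β2sls)ᵀ * (Y₁ᵀ * annih Z₁ * Y₁
          * ((Y₁ᵀ * annih Z * Y₁)⁻¹ * (Y₁ᵀ * (proj Z - proj Z₁) * Y₁ * (βols - β2sls)))) := by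
    rw [huu, hexp, hT2, hT3, hT4, hee]
    abel
  -- ## the inverse of the variance-difference matrix
  have hCprod : ((Y₁ᵀ * (proj Z - proj Z₁) * Y₁)⁻¹ - (Y₁ᵀ * annih Z₁ * Y₁)⁻¹)
      * (Y₁ᵀ * annih Z₁ * Y₁
        * ((Y₁ᵀ * annih Z * Y₁)⁻¹ * (Y₁ᵀ * (proj Z - proj Z₁) * Y₁))) = 1 := by
    have hBsum : Y₁ᵀ * annih Z₁ * Y₁
        = Y₁ᵀ * annih Z * Y₁ + Y₁ᵀ * (proj Z - proj Z₁) * Y₁ := by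
      rw [hBFA]; abel
    rw [Matrix.sub_mul, Matrix.inv_mul_cancel_left_of_invertible, hBsum,
      Matrix.add_mul, Matrix.mul_inv_cancel_left_of_invertible, Matrix.mul_add,
      Matrix.inv_mul_of_invertible, Matrix.inv_mul_cancel_left_of_invertible]
    abel
  have hCinv : ((Y₁ᵀ * (proj Z - proj Z₁) * Y₁)⁻¹ - (Y₁ᵀ * annih Z₁ * Y₁)⁻¹)⁻¹
      = Y₁ᵀ * annih Z₁ * Y₁
        * ((Y₁ᵀ * annih Z * Y₁)⁻¹ * (Y₁ᵀ * (proj Z - proj Z₁) * Y₁)) :=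
    Matrix.inv_eq_right_inv hCprod
  have hdet : IsUnit ((Y₁ᵀ * (proj Z - proj Z₁) * Y₁)⁻¹ - (Y₁ᵀ * annih Z₁ * Y₁)⁻¹).det :=
    Matrix.isUnit_det_of_right_inverse hCprod
  -- ## simplify tH1
  rw [hA0] at htH1
  haveI : Invertible σols2 := invertibleOfNonzero (ne_of_gt hσolspos)
  rw [Matrix.inv_smul _ σols2 hdet, hCinv, invOf_eq_inv, Matrix.mul_smul,
    Matrix.smul_mul, Matrix.smul_apply, smul_eq_mul] at htH1
  have hassoc : ((βols - β2sls)ᵀ * (Y₁ᵀ * annih Z₁ * Y₁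
        * ((Y₁ᵀ * annih Z * Y₁)⁻¹ * (Y₁ᵀ * (proj Z - proj Z₁) * Y₁)))
        * (βols - β2sls))
      = (βols - β2sls)ᵀ * (Y₁ᵀ * annih Z₁ * Y₁
        * ((Y₁ᵀ * annih Z * Y₁)⁻¹ * (Y₁ᵀ * (proj Z - proj Z₁) * Y₁ * (βols - β2sls)))) := by
    simp only [Matrix.mul_assoc]
  rw [hassoc] at htH1
  -- ## final scalar arithmetic
  have hnR : (n : ℝ) ≠ 0 := Nat.cast_ne_zero.mpr hn.ne'
  have hEn : ((Y₂ - X * θols)ᵀ * (Y₂ - X * θols)) 0 0 = σols2 * n := by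
    rw [hσols2]; field_simp
  have hBig00 : (uhatᵀ * uhat) 0 0
      = σols2 * n - ((βols - β2sls)ᵀ * (Y₁ᵀ * annih Z₁ * Y₁
        * ((Y₁ᵀ * annih Z * Y₁)⁻¹ * (Y₁ᵀ * (proj Z - proj Z₁) * Y₁ * (βols - β2sls))))) 0 0 := by
    rw [hBig, Matrix.sub_apply, hEn]
  rw [hσu2, hBig00, htH1]
  have hσne : σols2 ≠ 0 := ne_of_gt hσolspos
  field_simp
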